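/- arXiv:1506.08280 — 2 statements merged into one kernel-verified Lean document; each statement's English description precedes it below -/
import Mathlib

section
/- Suppose f : X → Y is a (λ₁,μ₁)-large scale Lipschitz function, where X is a δ-hyperbolic geodesic space (so that every point on a geodesic x₁y lies within distance δ of the union of geodesics x₀y ∪ x₁x₀ for any x₀). If f is (λ₂,μ₂)-radial with respect to some point x₀ ∈ X, then for every x₁ ∈ X, f is radial with respect to x₁; explicitly, for all x,y lying on a geodesic starting at x₁ one has λ₂·d(x,y) − μ ≤ d(f(x),f(y)), where μ is a constant depending only on λ₁, μ₁, λ₂, μ₂, δ and d(x₀,x₁). -/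
/-!
Let `γ` be a geodesic from `x₁` and `x = γ s`, `y = γ t` with `s ≤ t`. In the geodesic triangle
`x₁ y x₀`, thinness puts `x` within `δ` of a point of `x₀y` or of `x₁x₀`; in the second case `x₀`
itself is within `δ + d(x₀,x₁)` of `x`. Either way `x` is within `R = δ + d(x₀,x₁)` of a point `z`
of a geodesic from `x₀` to `y`, where the radial bound at `x₀` applies to `z, y`. Moving from `z`
to `x` costs `l₂ R` on the source side and `l₁ R + μ₁` on the target side, whence
`μ(D) = (l₁ + l₂)(δ + D) + μ₁ + μ₂`.
-/

open Filter Metric Set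

noncomputable section

namespace Gromov

variable {X : Type*} [MetricSpace X] {Y : Type*} [MetricSpace Y]

/-- The Gromov product `(x,y)_a = (d(x,a)+d(y,a)-d(x,y))/2`. -/
def gp (a x y : X) : ℝ := (dist x a + dist y a - dist x y) / 2

/-- Gromov `δ`-hyperbolicity via the `δ/4`-inequality. -/
def IsDeltaHyperbolic (X : Type*) [MetricSpace X] (δ : ℝ) : Prop :=
  ∀ x y z w : X, gp w x y ≥ min (gp w x z) (gp w z y) - δ / 4

/-- `γ` is a geodesic starting at `x`, parametrized by arclength on `[0, M]`. -/
def IsGeodesicOn (γ : ℝ → X) (x : X) (M : ℝ) : Prop :=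
  γ 0 = x ∧ ∀ s ∈ Icc (0:ℝ) M, ∀ t ∈ Icc (0:ℝ) M, dist (γ s) (γ t) = |s - t|

/-- Every two points are joined by a geodesic. -/
def IsGeodesicSpace (X : Type*) [MetricSpace X] : Prop :=
  ∀ x y : X, ∃ γ : ℝ → X, IsGeodesicOn γ x (dist x y) ∧ γ (dist x y) = y

/-- An infinite geodesic ray emanating from `x`. -/
def IsRay (γ : ℝ → X) (x : X) : Prop :=
  γ 0 = x ∧ ∀ s ∈ Ici (0:ℝ), ∀ t ∈ Ici (0:ℝ), dist (γ s) (γ t) = |s - t|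

/-- `f` is `(l, μ)`-large scale Lipschitz. -/
def IsLSL (f : X → Y) (l μ : ℝ) : Prop :=
  ∀ x y : X, dist (f x) (f y) ≤ l * dist x y + μ

/-- `f` is large scale Lipschitz. -/
def LSL (f : X → Y) : Prop := ∃ l μ : ℝ, 0 < l ∧ 0 < μ ∧ IsLSL f l μ

/-- The `(l2, μ2)`-radial lower bound condition with respect to `x₀`:
on every finite geodesic emanating from `x₀`, `l2·d(x,y) - μ2 ≤ d(f(x),f(y))`. -/
def IsRadialWith (f : X → Y) (x₀ : X) (l2 μ2 : ℝ) : Prop :=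
  ∀ M, 0 ≤ M → ∀ γ : ℝ → X, IsGeodesicOn γ x₀ M →
    ∀ s ∈ Icc (0:ℝ) M, ∀ t ∈ Icc (0:ℝ) M,
      l2 * dist (γ s) (γ t) - μ2 ≤ dist (f (γ s)) (f (γ t))

/-- `f` is a radial function with respect to `x₀`. -/
def Radial (f : X → Y) (x₀ : X) : Prop :=
  LSL f ∧ ∃ l2 μ2 : ℝ, 0 < l2 ∧ 0 < μ2 ∧ IsRadialWith f x₀ l2 μ2

/-- `f` is visual: for some basepoint `a`, `(x_n,y_n)_a → ∞` implies
`(f(x_n),f(y_n))_{f(a)} → ∞`. -/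
def VisualFn (f : X → Y) : Prop :=
  ∃ a : X, ∀ x y : ℕ → X,
    Tendsto (fun n => gp a (x n) (y n)) atTop atTop →
    Tendsto (fun n => gp (f a) (f (x n)) (f (y n))) atTop atTop

/-- `liminf_{i,j→∞} (x_i,x_j)_a = ∞`: the sequence converges to infinity. -/
def ConvSeq (a : X) (x : ℕ → X) : Prop :=
  Tendsto (fun p : ℕ × ℕ => gp a (x p.1) (x p.2)) atTop atTop

/-- `liminf_{i,j→∞} (x_i,y_j)_a = ∞`: the two sequences are equivalent. -/
def SeqEquiv (a : X) (x y : ℕ → X) : Prop :=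
  Tendsto (fun p : ℕ × ℕ => gp a (x p.1) (y p.2)) atTop atTop

def BSeq (a : X) : Type _ := {x : ℕ → X // ConvSeq a x}

/-- The sequential boundary `∂X` with basepoint `a`. -/
def Boundary (a : X) : Type _ := Quot (fun x y : BSeq a => SeqEquiv a x.1 y.1)

/-- The boundary point represented by a sequence. -/
def bpt (a : X) (x : ℕ → X) (hx : ConvSeq a x) : Boundary a :=
  Quot.mk _ ⟨x, hx⟩

/-- `liminf_{i,j→∞} (x_i,y_j)_a` as an extended real. -/
def gpSeqs (a : X) (x y : ℕ → X) : EReal :=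
  liminf (fun p : ℕ × ℕ => ((gp a (x p.1) (y p.2)) : EReal)) atTop

/-- The basic neighborhood `U(p,r)` in the sequential boundary. -/
def U (a : X) (p : Boundary a) (r : ℝ) : Set (Boundary a) :=
  {q | ∃ (x y : ℕ → X) (hx : ConvSeq a x) (hy : ConvSeq a y),
    bpt a x hx = p ∧ bpt a y hy = q ∧ (r : EReal) ≤ gpSeqs a x y}

instance (a : X) : TopologicalSpace (Boundary a) :=
  TopologicalSpace.generateFrom {s | ∃ p r, 0 < r ∧ s = U a p r}

/-- The union `X ∪ ∂X`. -/
def Comp (a : X) : Type _ := X ⊕ Boundary a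

def Comp.inl {a : X} (x : X) : Comp a := Sum.inl x
def Comp.inr {a : X} (p : Boundary a) : Comp a := Sum.inr p

/-- The extension of `U(p,r)` to `X ∪ ∂X`. -/
def UFull (a : X) (p : Boundary a) (r : ℝ) : Set (Comp a) :=
  {z : X ⊕ Boundary a | Sum.elim
    (fun x : X => ∃ (s : ℕ → X) (hs : ConvSeq a s), bpt a s hs = p ∧
      (r : EReal) ≤ liminf (fun i : ℕ => ((gp a (s i) x) : EReal)) atTop)
    (fun q : Boundary a => q ∈ U a p r) z}

instance (a : X) : TopologicalSpace (Comp a) :=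
  TopologicalSpace.generateFrom
    ({s | ∃ u : Set X, IsOpen u ∧ s = Comp.inl '' u} ∪
     {s | ∃ p r, 0 < r ∧ s = UFull a p r})

/-- The Gromov product of two boundary points:
`(p,q)_a = inf liminf_{i→∞} (x_i,y_i)_a` over representatives. -/
def gpBoundary (a : X) (p q : Boundary a) : EReal :=
  sInf {e : EReal | ∃ (x y : ℕ → X) (hx : ConvSeq a x) (hy : ConvSeq a y),
    bpt a x hx = p ∧ bpt a y hy = q ∧
    e = liminf (fun i : ℕ => ((gp a (x i) (y i)) : EReal)) atTop}

/-- `K^{-e}` for an extended real exponent `e` (with `K^{-∞} = 0`). -/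
def negPow (K : ℝ) (e : EReal) : ℝ :=
  if e = ⊤ then 0 else if e = ⊥ then 0 else Real.rpow K (-(e.toReal))

/-- `d` is a visual metric on `∂X` with parameters `K, C > 1`. -/
def IsVisualMetric (a : X) (d : Boundary a → Boundary a → ℝ) (K C : ℝ) : Prop :=
  1 < K ∧ 1 < C ∧ ∀ p q : Boundary a,
    negPow K (gpBoundary a p q) / C ≤ d p q ∧ d p q ≤ C * negPow K (gpBoundary a p q)

/-- A map between sets with distinguished distance functions is Hölder. -/
def IsHolder {A B : Type*} (dA : A → A → ℝ) (dB : B → B → ℝ) (g : A → B) : Prop :=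
  ∃ L α : ℝ, 0 < L ∧ 0 < α ∧ ∀ p q : A, dB (g p) (g q) ≤ L * Real.rpow (dA p q) α

/-- `(ξ₁,ξ₂)_a = liminf_{t→∞} (ξ₁(t),ξ₂(t))_a` for rays. -/
def gpRays (a : X) (ξ₁ ξ₂ : ℝ → X) : EReal :=
  liminf (fun t : ℝ => ((gp a (ξ₁ t) (ξ₂ t)) : EReal)) atTop

/-- The geodesic ray `ξ` represents the boundary point `p`. -/
def RayRepresents (a : X) (ξ : ℝ → X) (p : Boundary a) : Prop :=
  ∃ h : ConvSeq a (fun n : ℕ => ξ n), bpt a (fun n : ℕ => ξ n) h = p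

/-- `(x,ξ)_a = liminf_{n→∞} (x,ξ(n))_a`. -/
def gpPointRay (a x : X) (ξ : ℝ → X) : ℝ :=
  liminf (fun n : ℕ => gp a x (ξ n)) atTop

/-- `X` is a visual hyperbolic space with basepoint `a` and constant `D`. -/
def IsVisualSpace (a : X) (D : ℝ) : Prop :=
  ∀ x : X, ∃ ξ : ℝ → X, IsRay ξ a ∧ gpPointRay a x ξ > dist x a - D

/-- A maximal finite geodesic from `a`: it admits no proper geodesic extension. -/
def MaximalGeodesic (ζ : ℝ → X) (a : X) (M : ℝ) : Prop :=
  IsGeodesicOn ζ a M ∧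
    ¬ ∃ (M' : ℝ) (ζ' : ℝ → X), M < M' ∧ IsGeodesicOn ζ' a M' ∧
      ∀ t ∈ Icc (0:ℝ) M, ζ' t = ζ t

/-- `f : X → Y` is a radial extension with parameter `A` of `g : ∂X → ∂Y`
(`D` being the visuality constant of `X`). -/
def IsRadialExtension (a : X) (b : Y) (g : Boundary a → Boundary b)
    (A D : ℝ) (f : X → Y) : Prop :=
  f a = b ∧
  ∀ x : X, x ≠ a →
    ((∃ (ξ : ℝ → X) (t : ℝ), IsRay ξ a ∧ 0 ≤ t ∧ ξ t = x) →
      ∃ (ξ : ℝ → X) (t : ℝ) (η : ℝ → Y), IsRay ξ a ∧ 0 ≤ t ∧ ξ t = x ∧ IsRay η b ∧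
        (∃ p : Boundary a, RayRepresents a ξ p ∧ RayRepresents b η (g p)) ∧
        f x = η (A * t)) ∧
    ((¬ ∃ (ξ : ℝ → X) (t : ℝ), IsRay ξ a ∧ 0 ≤ t ∧ ξ t = x) →
      ∃ (M t : ℝ) (ζ ξ : ℝ → X) (η : ℝ → Y),
        MaximalGeodesic ζ a M ∧ t ∈ Icc (0:ℝ) M ∧ ζ t = x ∧
        IsRay ξ a ∧ gpPointRay a (ζ M) ξ > dist (ζ M) a - D ∧ IsRay η b ∧
        (∃ p : Boundary a, RayRepresents a ξ p ∧ RayRepresents b η (g p)) ∧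
        f x = η (A * t))

/-- `f` is coarsely surjective. -/
def CoarselySurjective (f : X → Y) : Prop :=
  ∃ S : ℝ, 0 < S ∧ ∀ y : Y, ∃ x : X, dist y (f x) ≤ S

/-- `f` is bornologous (coarse). -/
def Bornologous (f : X → Y) : Prop :=
  ∀ R : ℝ, 0 < R → ∃ S : ℝ, 0 < S ∧ ∀ x x' : X, dist x x' ≤ R → dist (f x) (f x') ≤ S

/-- `f` is a coarse embedding. -/
def CoarseEmbedding (f : X → Y) : Prop :=
  Bornologous f ∧
    ∀ R : ℝ, 0 < R → ∃ S : ℝ, 0 < S ∧ ∀ x x' : X, dist (f x) (f x') ≤ R → dist x x' ≤ S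

/-- `f` is coarsely `n`-to-1. -/
def CoarselyNto1 (f : X → Y) (n : ℕ) : Prop :=
  ∀ R : ℝ, 0 < R → ∃ S : ℝ, 0 < S ∧ ∀ A : Set Y, EMetric.diam A < ENNReal.ofReal R →
    ∃ B : Fin n → Set X, (f ⁻¹' A = ⋃ i, B i) ∧
      ∀ i, EMetric.diam (B i) < ENNReal.ofReal S

/-- `g : ∂X → ∂Y` is the boundary map induced by `f`, i.e. `g [(x_n)] = [(f(x_n))]`. -/
def InducedBoundaryMap (a : X) (f : X → Y) (g : Boundary a → Boundary (f a)) : Prop :=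
  ∀ (x : ℕ → X) (hx : ConvSeq a x) (hfx : ConvSeq (f a) (f ∘ x)),
    g (bpt a x hx) = bpt (f a) (f ∘ x) hfx

/-- `g` is (at most) `n`-to-1. -/
def NTo1 {A B : Type*} (g : A → B) (n : ℕ) : Prop :=
  ∀ b : B, ∃ s : Finset A, s.card ≤ n ∧ ∀ a : A, g a = b → a ∈ s

/-- Covering dimension at most `n`: every open cover admits an open refinement
of multiplicity at most `n+1`. -/
def CovDimLE (Z : Type*) [TopologicalSpace Z] (n : ℕ) : Prop :=
  ∀ 𝒰 : Set (Set Z), (∀ u ∈ 𝒰, IsOpen u) → ⋃₀ 𝒰 = univ →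
    ∃ 𝒱 : Set (Set Z), (∀ v ∈ 𝒱, IsOpen v) ∧ ⋃₀ 𝒱 = univ ∧
      (∀ v ∈ 𝒱, ∃ u ∈ 𝒰, v ⊆ u) ∧
      ∀ z : Z, {v ∈ 𝒱 | z ∈ v}.Finite ∧ {v ∈ 𝒱 | z ∈ v}.ncard ≤ n + 1

/-- `c_{f,n}(r)`: the supremum of numbers `B` such that there exist `n+1` points
with mutual Gromov products `< r` whose images have mutual Gromov products `≥ B`. -/
def cfn (a : X) (b : Y) (f : X → Y) (n : ℕ) (r : ℝ) : EReal :=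
  sSup {e : EReal | ∃ (B : ℝ) (x : Fin (n + 1) → X), e = (B : EReal) ∧
    (∀ i j, i ≠ j → gp a (x i) (x j) < r) ∧
    (∀ i j, i ≠ j → B ≤ gp b (f (x i)) (f (x j)))}

def ThinTriangles (X : Type*) [MetricSpace X] (δ : ℝ) : Prop :=
  ∀ (u v w : X) (γ γ' γ'' : ℝ → X),
    IsGeodesicOn γ u (dist u v) → γ (dist u v) = v →
    IsGeodesicOn γ' w (dist w v) → γ' (dist w v) = v →
    IsGeodesicOn γ'' u (dist u w) → γ'' (dist u w) = w →
    ∀ t ∈ Icc (0:ℝ) (dist u v),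
      ∃ z ∈ γ' '' Icc (0:ℝ) (dist w v) ∪ γ'' '' Icc (0:ℝ) (dist u w),
        dist (γ t) z ≤ δ

namespace IsGeodesicOn

variable {γ : ℝ → X} {x : X} {M s t : ℝ}

theorem mono (hγ : IsGeodesicOn γ x M) (ht : t ≤ M) : IsGeodesicOn γ x t :=
  ⟨hγ.1, fun a ha b hb => hγ.2 a ⟨ha.1, ha.2.trans ht⟩ b ⟨hb.1, hb.2.trans ht⟩⟩

theorem dist_eq_sub (hγ : IsGeodesicOn γ x M) (hs : s ∈ Icc 0 M) (ht : t ∈ Icc 0 M)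
    (hst : s ≤ t) : dist (γ s) (γ t) = t - s := by
  rw [hγ.2 s hs t ht, abs_of_nonpos (sub_nonpos.2 hst), neg_sub]

theorem dist_start (hγ : IsGeodesicOn γ x M) (ht : t ∈ Icc 0 M) : dist x (γ t) = t := by
  rw [← hγ.1, hγ.dist_eq_sub ⟨le_rfl, ht.1.trans ht.2⟩ ht ht.1, sub_zero]

theorem dist_end_le (hγ : IsGeodesicOn γ x M) (ht : t ∈ Icc 0 M) : dist (γ t) (γ M) ≤ M := by
  rw [hγ.dist_eq_sub ht ⟨ht.1.trans ht.2, le_rfl⟩ ht.2]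
  linarith [ht.1]

end IsGeodesicOn

theorem ThinTriangles.exists_dist_le_add_dist {δ : ℝ} (hthin : ThinTriangles X δ)
    (hgeo : IsGeodesicSpace X) {x₀ x₁ : X} {γ γ' : ℝ → X} {M s t : ℝ}
    (hγ : IsGeodesicOn γ x₁ M) (ht : t ∈ Icc 0 M) (hs : s ∈ Icc 0 t)
    (hγ' : IsGeodesicOn γ' x₀ (dist x₀ (γ t))) (hγ't : γ' (dist x₀ (γ t)) = γ t) :
    ∃ r ∈ Icc 0 (dist x₀ (γ t)), dist (γ s) (γ' r) ≤ δ + dist x₀ x₁ := by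
  have hlen : dist x₁ (γ t) = t := hγ.dist_start ht
  obtain ⟨γ'', hγ'', hγ''x₀⟩ := hgeo x₁ x₀
  obtain ⟨z, hz, hsz⟩ := hthin x₁ (γ t) x₀ γ γ' γ''
    (by rw [hlen]; exact hγ.mono ht.2) (by rw [hlen]) hγ' hγ't hγ'' hγ''x₀ s (by rwa [hlen])
  rcases hz with ⟨r, hr, rfl⟩ | ⟨r, hr, rfl⟩
  · exact ⟨r, hr, hsz.trans (le_add_of_nonneg_right dist_nonneg)⟩
  · refine ⟨0, ⟨le_rfl, dist_nonneg⟩, ?_⟩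
    have hrx₀ := hγ''.dist_end_le hr
    rw [hγ''x₀, dist_comm x₁ x₀] at hrx₀
    rw [hγ'.1]
    linarith [dist_triangle (γ s) (γ'' r) x₀]

theorem IsRadialWith.sub_le_dist_of_dist_le {f : X → Y} {x₀ : X} {l1 μ1 l2 μ2 : ℝ}
    (hrad : IsRadialWith f x₀ l2 μ2) (hf : IsLSL f l1 μ1) (hl1 : 0 ≤ l1) (hl2 : 0 ≤ l2)
    {γ : ℝ → X} {L r R : ℝ} (hγ : IsGeodesicOn γ x₀ L) (hr : r ∈ Icc 0 L) {p : X}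
    (hp : dist p (γ r) ≤ R) :
    l2 * dist p (γ L) - ((l1 + l2) * R + μ1 + μ2) ≤ dist (f p) (f (γ L)) := by
  have hL : 0 ≤ L := hr.1.trans hr.2
  have hradial := hrad L hL γ hγ r hr L ⟨hL, le_rfl⟩
  have hsource : l2 * dist p (γ L) ≤ l2 * (R + dist (γ r) (γ L)) := by
    gcongr
    linarith [dist_triangle p (γ r) (γ L)]
  have htarget : dist (f (γ r)) (f p) ≤ l1 * R + μ1 := by
    have hlsl := hf (γ r) p
    rw [dist_comm (γ r) p] at hlsl
    linarith [mul_le_mul_of_nonneg_left hp hl1]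
  linarith [dist_triangle (f (γ r)) (f p) (f (γ L))]

theorem isRadialWith_of_forall_le {f : X → Y} {x₁ : X} {l2 μ : ℝ}
    (h : ∀ M (γ : ℝ → X), IsGeodesicOn γ x₁ M → ∀ s ∈ Icc (0:ℝ) M, ∀ t ∈ Icc (0:ℝ) M, s ≤ t →
      l2 * dist (γ s) (γ t) - μ ≤ dist (f (γ s)) (f (γ t))) :
    IsRadialWith f x₁ l2 μ := by
  intro M _ γ hγ s hs t ht
  rcases le_total s t with hst | hts
  · exact h M γ hγ s hs t ht hst
  · simpa only [dist_comm] using h M γ hγ t ht s hs hts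

theorem stmt3_general {X : Type*} [MetricSpace X] {Y : Type*} [MetricSpace Y]
    (δ : ℝ) (hgeo : IsGeodesicSpace X)
    (hthin : ∀ (u v w : X) (γ γ' γ'' : ℝ → X),
      IsGeodesicOn γ u (dist u v) → γ (dist u v) = v →
      IsGeodesicOn γ' w (dist w v) → γ' (dist w v) = v →
      IsGeodesicOn γ'' u (dist u w) → γ'' (dist u w) = w →
      ∀ t ∈ Icc (0:ℝ) (dist u v),
        ∃ z ∈ γ' '' Icc (0:ℝ) (dist w v) ∪ γ'' '' Icc (0:ℝ) (dist u w),
          dist (γ t) z ≤ δ)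
    (f : X → Y) (l1 μ1 l2 μ2 : ℝ) (hl1 : 0 < l1)
    (hl2 : 0 < l2)
    (hf : IsLSL f l1 μ1) (x₀ : X) (hrad : IsRadialWith f x₀ l2 μ2) :
    ∃ μ : ℝ → ℝ, ∀ x₁ : X, IsRadialWith f x₁ l2 (μ (dist x₀ x₁)) := by
  refine ⟨fun D => (l1 + l2) * (δ + D) + μ1 + μ2, fun x₁ => ?_⟩
  refine isRadialWith_of_forall_le fun M γ hγ s hs t ht hst => ?_
  obtain ⟨γ', hγ', hγ't⟩ := hgeo x₀ (γ t)
  obtain ⟨r, hr, hsr⟩ :=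
    ThinTriangles.exists_dist_le_add_dist hthin hgeo hγ ht ⟨hs.1, hst⟩ hγ' hγ't
  simpa only [hγ't] using hrad.sub_le_dist_of_dist_le hf hl1.le hl2.le hγ' hr hsr

/-- a `(λ₂,μ₂)`-radial function on a δ-hyperbolic (thin-triangles)
geodesic space is radial with respect to any other basepoint `x₁`, with a
constant depending only on the data and `d(x₀,x₁)`. -/
theorem stmt3 {X : Type*} [MetricSpace X] {Y : Type*} [MetricSpace Y]
    (δ : ℝ) (hδ : 0 ≤ δ) (hgeo : IsGeodesicSpace X)
    (hthin : ∀ (u v w : X) (γ γ' γ'' : ℝ → X),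
      IsGeodesicOn γ u (dist u v) → γ (dist u v) = v →
      IsGeodesicOn γ' w (dist w v) → γ' (dist w v) = v →
      IsGeodesicOn γ'' u (dist u w) → γ'' (dist u w) = w →
      ∀ t ∈ Icc (0:ℝ) (dist u v),
        ∃ z ∈ γ' '' Icc (0:ℝ) (dist w v) ∪ γ'' '' Icc (0:ℝ) (dist u w),
          dist (γ t) z ≤ δ)
    (f : X → Y) (l1 μ1 l2 μ2 : ℝ) (hl1 : 0 < l1) (hμ1 : 0 < μ1)
    (hl2 : 0 < l2) (hμ2 : 0 < μ2)
    (hf : IsLSL f l1 μ1) (x₀ : X) (hrad : IsRadialWith f x₀ l2 μ2) :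
    ∃ μ : ℝ → ℝ, ∀ x₁ : X, IsRadialWith f x₁ l2 (μ (dist x₀ x₁)) :=
  stmt3_general δ hgeo hthin f l1 μ1 l2 μ2 hl1 hl2 hf x₀ hrad

end Gromov
end
end

section
/- Suppose f : X → Y is a (λ,μ)-large scale Lipschitz function between proper hyperbolic geodesic spaces, X is visual with basepoint a and constant D, and there exist λ₂,μ₂ > 0 so that for every infinite geodesic ray γ : [0,∞) → X with γ(0) = a one has λ₂·d(x,y) − μ₂ ≤ d(f(x),f(y)) for all x,y on the image of γ. Then f is radial with respect to a; explicitly, with μ₃ = λ₂(2D+2δ)+μ₂+λ(2D+2δ)+2μ one has λ₂·d(x,y) − μ₃ ≤ d(f(x),f(y)) for all x,y lying on any finite geodesic starting at a. -/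
/-!
Let `γ` be a geodesic of length `M` from `a`. Visuality gives a ray `ξ` from `a` with
`(γ M, ξ)_a > M - D`, and the four-point condition along `γ u, γ M, ξ n, ξ u` shows that
`d(γ u, ξ u) ≤ 2 (u - min u (M - D)) + δ`: the two curves are `δ`-close up to time `M - D`.
If `s` and `t` both lie in the last stretch of length `D` of `γ`, the inequality is trivial.
Otherwise the two excesses over `M - D` add up to at most `D`, so `γ s, γ t` are within total
distance `2D + 2δ` of `ξ s, ξ t`, and the lower bound along the ray `ξ` transfers to `γ` at the
cost of the large scale Lipschitz constants of `f`.
-/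


open Filter Metric Set

noncomputable section

namespace Gromov

variable {X : Type*} [MetricSpace X] {Y : Type*} [MetricSpace Y]

lemma gp_comm (a x y : X) : gp a x y = gp a y x := by
  simp only [gp, dist_comm x y]; ring

lemma gp_nonneg (a x y : X) : 0 ≤ gp a x y := by
  simp only [gp]; linarith [dist_triangle x a y, dist_comm a y]

lemma gp_eq_dist_of_dist_add_dist_eq {a x y : X} (h : dist x a + dist x y = dist y a) :
    gp a x y = dist x a := by
  simp only [gp]; linarith

lemma IsDeltaHyperbolic.nonneg {δ : ℝ} (hX : IsDeltaHyperbolic X δ) (x : X) : 0 ≤ δ := by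
  have h := hX x x x x
  simp only [gp, dist_self, min_self] at h
  linarith

lemma IsDeltaHyperbolic.min_min_sub_le_gp {δ : ℝ} (hX : IsDeltaHyperbolic X δ) (w x y z v : X) :
    min (min (gp w x z) (gp w z v)) (gp w v y) - δ / 2 ≤ gp w x y := by
  have hδ := hX.nonneg x
  have hxv := hX x v z w
  have hxy := hX x y v w
  have hm := min_le_left (min (gp w x z) (gp w z v)) (gp w v y)
  have hm' := min_le_right (min (gp w x z) (gp w z v)) (gp w v y)
  have : min (min (gp w x z) (gp w z v)) (gp w v y) - δ / 4 ≤ min (gp w x v) (gp w v y) :=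
    le_min (by linarith) (by linarith)
  linarith

lemma IsGeodesicOn.dist_base {γ : ℝ → X} {x : X} {M u : ℝ} (hγ : IsGeodesicOn γ x M)
    (hu : u ∈ Icc 0 M) : dist (γ u) x = u := by
  rw [← hγ.1, hγ.2 u hu 0 ⟨le_rfl, hu.1.trans hu.2⟩, sub_zero, abs_of_nonneg hu.1]

lemma IsGeodesicOn.gp_eq {γ : ℝ → X} {x : X} {M u v : ℝ} (hγ : IsGeodesicOn γ x M)
    (hu : u ∈ Icc 0 M) (hv : v ∈ Icc 0 M) (huv : u ≤ v) : gp x (γ u) (γ v) = u := by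
  refine (gp_eq_dist_of_dist_add_dist_eq ?_).trans (hγ.dist_base hu)
  rw [hγ.dist_base hu, hγ.dist_base hv, hγ.2 u hu v hv, abs_of_nonpos (by linarith)]
  ring

lemma IsRay.isGeodesicOn {ξ : ℝ → X} {x : X} (hξ : IsRay ξ x) (M : ℝ) : IsGeodesicOn ξ x M :=
  ⟨hξ.1, fun s hs t ht => hξ.2 s hs.1 t ht.1⟩

lemma eventually_lt_gp_of_lt_gpPointRay {a x : X} {ξ : ℝ → X} {c : ℝ}
    (h : c < gpPointRay a x ξ) : ∀ᶠ n : ℕ in atTop, c < gp a x (ξ n) :=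
  eventually_lt_of_lt_liminf h ⟨0, eventually_map.mpr (.of_forall fun _ => gp_nonneg _ _ _)⟩

lemma dist_le_of_lt_gpPointRay {δ : ℝ} (hX : IsDeltaHyperbolic X δ) {a : X} {γ ξ : ℝ → X}
    {M c u : ℝ} (hγ : IsGeodesicOn γ a M) (hξ : IsRay ξ a) (hc : c < gpPointRay a (γ M) ξ)
    (hu : u ∈ Icc 0 M) : dist (γ u) (ξ u) ≤ 2 * (u - min u c) + δ := by
  obtain ⟨n, hcn, hun⟩ :=
    ((eventually_lt_gp_of_lt_gpPointRay hc).and (eventually_ge_atTop ⌈u⌉₊)).exists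
  have hun : u ≤ n := (Nat.le_ceil u).trans (by exact_mod_cast hun)
  have hM : M ∈ Icc 0 M := ⟨hu.1.trans hu.2, le_rfl⟩
  have hγu : gp a (γ u) (γ M) = u := hγ.gp_eq hu hM hu.2
  have hξu : gp a (ξ n) (ξ u) = u := by
    rw [gp_comm]; exact (hξ.isGeodesicOn n).gp_eq ⟨hu.1, hun⟩ ⟨hu.1.trans hun, le_rfl⟩ hun
  have hchain := hX.min_min_sub_le_gp a (γ u) (ξ u) (γ M) (ξ n)
  have hgp : gp a (γ u) (ξ u) = (u + u - dist (γ u) (ξ u)) / 2 := by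
    simp only [gp, hγ.dist_base hu, (hξ.isGeodesicOn u).dist_base ⟨hu.1, le_rfl⟩]
  rw [hγu, hξu, hgp] at hchain
  have : min u c ≤ min (min u (gp a (γ M) (ξ n))) u :=
    le_min (min_le_min le_rfl hcn.le) (min_le_left u c)
  linarith

lemma IsLSL.sub_le_dist_of_near {f : X → Y} {l μ : ℝ} (hf : IsLSL f l μ) (hl : 0 ≤ l)
    {l2 μ2 E : ℝ} {x y x' y' : X} (h' : l2 * dist x' y' - μ2 ≤ dist (f x') (f y'))
    (hdist : dist x' y' = dist x y) (hnear : dist x x' + dist y y' ≤ E) :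
    l2 * dist x y - μ2 - (l * E + 2 * μ) ≤ dist (f x) (f y) := by
  have htri := dist_triangle4 (f x') (f x) (f y) (f y')
  rw [dist_comm (f x') (f x)] at htri
  rw [hdist] at h'
  linarith [hf x x', hf y y', mul_le_mul_of_nonneg_left hnear hl, mul_add l (dist x x') (dist y y')]

lemma sub_min_add_sub_min_le {s t c D : ℝ} (hD : 0 ≤ D) (hs : s ≤ c + D) (ht : t ≤ c + D)
    (h : s ≤ c ∨ t ≤ c) : (s - min s c) + (t - min t c) ≤ D := by
  rcases h with h | h <;> rw [min_eq_left h] <;>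
    linarith [le_min (by linarith : s - D ≤ s) (by linarith : s - D ≤ c),
      le_min (by linarith : t - D ≤ t) (by linarith : t - D ≤ c)]

theorem stmt4_general {X : Type*} [MetricSpace X]
    {Y : Type*} [MetricSpace Y]
    (δ : ℝ) (hX : IsDeltaHyperbolic X δ)
    (f : X → Y) (l μ : ℝ) (hl : 0 < l) (hμ : 0 < μ) (hf : IsLSL f l μ)
    (a : X) (D : ℝ) (hD : 0 < D) (hvisX : IsVisualSpace a D)
    (l2 μ2 : ℝ) (hl2 : 0 < l2) (hμ2 : 0 < μ2)
    (hray : ∀ γ : ℝ → X, IsRay γ a → ∀ s ∈ Ici (0:ℝ), ∀ t ∈ Ici (0:ℝ),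
      l2 * dist (γ s) (γ t) - μ2 ≤ dist (f (γ s)) (f (γ t))) :
    IsRadialWith f a l2 (l2 * (2*D + 2*δ) + μ2 + l * (2*D + 2*δ) + 2*μ) := by
  have hδ := hX.nonneg a
  intro M hM γ hγ s hs t ht
  obtain ⟨ξ, hξ, hvis⟩ := hvisX (γ M)
  rw [hγ.dist_base ⟨hM, le_rfl⟩] at hvis
  have hl2D : 0 ≤ l2 * (2 * D + 2 * δ) := by positivity
  by_cases hnear : M - D < s ∧ M - D < t
  · have hst : dist (γ s) (γ t) ≤ 2 * D + 2 * δ := by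
      rw [hγ.2 s hs t ht, abs_le]; constructor <;> linarith [hs.2, ht.2]
    have hlD : 0 ≤ l * (2 * D + 2 * δ) := by positivity
    linarith [mul_le_mul_of_nonneg_left hst hl2.le, dist_nonneg (x := f (γ s)) (y := f (γ t))]
  · have hexcess := sub_min_add_sub_min_le (s := s) (t := t) (c := M - D) hD.le
      (by linarith [hs.2]) (by linarith [ht.2]) (by simpa only [not_and_or, not_lt] using hnear)
    have hclose : dist (γ s) (ξ s) + dist (γ t) (ξ t) ≤ 2 * D + 2 * δ := by
      linarith [dist_le_of_lt_gpPointRay hX hγ hξ hvis hs,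
        dist_le_of_lt_gpPointRay hX hγ hξ hvis ht]
    have := hf.sub_le_dist_of_near hl.le (hray ξ hξ s hs.1 t ht.1)
      (by rw [hξ.2 s hs.1 t ht.1, hγ.2 s hs t ht]) hclose
    linarith

/-- if `X` is visual and the radial lower bound holds along all
infinite geodesic rays from the basepoint, then it holds along all finite
geodesics from the basepoint, with the explicit constant
`μ₃ = λ₂(2D+2δ)+μ₂+λ(2D+2δ)+2μ`; i.e. `f` is radial. -/
theorem stmt4 {X : Type*} [MetricSpace X] [ProperSpace X]
    {Y : Type*} [MetricSpace Y] [ProperSpace Y]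
    (δ : ℝ) (hX : IsDeltaHyperbolic X δ) (hY : IsDeltaHyperbolic Y δ)
    (hgX : IsGeodesicSpace X) (hgY : IsGeodesicSpace Y)
    (f : X → Y) (l μ : ℝ) (hl : 0 < l) (hμ : 0 < μ) (hf : IsLSL f l μ)
    (a : X) (D : ℝ) (hD : 0 < D) (hvisX : IsVisualSpace a D)
    (l2 μ2 : ℝ) (hl2 : 0 < l2) (hμ2 : 0 < μ2)
    (hray : ∀ γ : ℝ → X, IsRay γ a → ∀ s ∈ Ici (0:ℝ), ∀ t ∈ Ici (0:ℝ),
      l2 * dist (γ s) (γ t) - μ2 ≤ dist (f (γ s)) (f (γ t))) :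
    IsRadialWith f a l2 (l2 * (2*D + 2*δ) + μ2 + l * (2*D + 2*δ) + 2*μ) :=
  stmt4_general δ hX f l μ hl hμ hf a D hD hvisX l2 μ2 hl2 hμ2 hray

end Gromov
end
end
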